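/- arXiv:1912.06675 — 2 statements merged into one kernel-verified Lean document; each statement's English description precedes it below -/
import Mathlib

section
/- Let K ≥ 2, let n ≥ 1, and let l : Fin n → Fin K → ℝ give, for each observation i, the loss l(i,k) of expert k at observation i. Define weights w : Fin n → Fin K → ℝ by w(i,k) = (1/(K−1)) · (∑_{j} l(i,j)) − l(i,k). Then for every function o : Fin n → Fin K: ∑_{i} ∑_{k} 1{o(i) = k} · l(i,k) = ∑_{i} ∑_{k} w(i,k) · 1{o(i) ≠ k}. That is, the total loss of the oracle-selected experts equals the weighted misclassification error of o on the extended dataset. -/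
/-- With per-observation weights `w i k = (1/(K-1)) * (∑ j, l i j) - l i k`,
for every oracle `o : Fin n → Fin K`, the total loss of the oracle-selected experts
equals the weighted misclassification error of `o` on the extended dataset. -/
theorem stmt_3 (K n : ℕ) (hK : 2 ≤ K) (hn : 1 ≤ n)
    (l : Fin n → Fin K → ℝ) (w : Fin n → Fin K → ℝ)
    (hw : ∀ i k, w i k = (1 / ((K : ℝ) - 1)) * (∑ j, l i j) - l i k)
    (o : Fin n → Fin K) :
    ∑ i, ∑ k, (if o i = k then (1 : ℝ) else 0) * l i k
      = ∑ i, ∑ k, w i k * (if o i ≠ k then (1 : ℝ) else 0) := by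
  have hK1 : ((K : ℝ) - 1) ≠ 0 := by
    have : (2 : ℝ) ≤ (K : ℝ) := by exact_mod_cast hK
    linarith
  refine Finset.sum_congr rfl fun i _ => ?_
  have hL : ∑ k, (if o i = k then (1 : ℝ) else 0) * l i k = l i (o i) := by
    simp [ite_mul]
  have hR : ∑ k, w i k * (if o i ≠ k then (1 : ℝ) else 0)
      = (∑ k, w i k) - w i (o i) := by
    have : ∀ k : Fin K, w i k * (if o i ≠ k then (1 : ℝ) else 0)
        = w i k - (if o i = k then w i k else 0) := by
      intro k; by_cases h : o i = k <;> simp [h]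
    rw [Finset.sum_congr rfl fun k _ => this k, Finset.sum_sub_distrib]
    simp
  rw [hL, hR]
  have hsum : ∑ k, w i k = (K : ℝ) * ((1 / ((K : ℝ) - 1)) * (∑ j, l i j))
      - ∑ j, l i j := by
    simp [hw, Finset.sum_sub_distrib, Finset.sum_const, mul_comm]
  rw [hsum, hw]
  field_simp
  ring
end

section
/- Let K ≥ 2, n ≥ 1, losses l : Fin n → Fin K → ℝ, and weights w : Fin n → Fin K → ℝ defined by w(i,k) = (1/(K−1)) · (∑_{j} l(i,j)) − l(i,k). Let O be any set of functions from Fin n to Fin K. Then a function o* ∈ O minimizes the objective o ↦ ∑_{i} ∑_{k} 1{o(i) = k} · l(i,k) over O if and only if o* minimizes the weighted misclassification objective o ↦ ∑_{i} ∑_{k} w(i,k) · 1{o(i) ≠ k} over O. -/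
/-- Lemma 1: With weights `w i k = (1/(K-1)) * (∑ j, l i j) - l i k`,
a function `o* ∈ O` minimizes the oracle objective `∑ i ∑ k 1{o i = k} * l i k` over `O`
iff it minimizes the weighted misclassification objective `∑ i ∑ k w i k * 1{o i ≠ k}`. -/
theorem stmt_4 (K n : ℕ) (hK : 2 ≤ K) (hn : 1 ≤ n)
    (l : Fin n → Fin K → ℝ) (w : Fin n → Fin K → ℝ)
    (hw : ∀ i k, w i k = (1 / ((K : ℝ) - 1)) * (∑ j, l i j) - l i k)
    (O : Set (Fin n → Fin K)) (ostar : Fin n → Fin K) (hostar : ostar ∈ O) :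
    (∀ o ∈ O,
        ∑ i, ∑ k, (if ostar i = k then (1 : ℝ) else 0) * l i k
          ≤ ∑ i, ∑ k, (if o i = k then (1 : ℝ) else 0) * l i k) ↔
    (∀ o ∈ O,
        ∑ i, ∑ k, w i k * (if ostar i ≠ k then (1 : ℝ) else 0)
          ≤ ∑ i, ∑ k, w i k * (if o i ≠ k then (1 : ℝ) else 0)) := by
  have h1 : ∀ o : Fin n → Fin K,
      ∑ i, ∑ k, (if o i = k then (1 : ℝ) else 0) * l i k = ∑ i, l i (o i) := by
    intro o
    refine Finset.sum_congr rfl fun i _ => ?_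
    simp [ite_mul, Finset.sum_ite_eq]
  have h2 : ∀ o : Fin n → Fin K,
      ∑ i, ∑ k, w i k * (if o i ≠ k then (1 : ℝ) else 0)
        = (∑ i, ∑ k, w i k) - ∑ i, w i (o i) := by
    intro o
    rw [← Finset.sum_sub_distrib]
    refine Finset.sum_congr rfl fun i _ => ?_
    have : ∀ k : Fin K, w i k * (if o i ≠ k then (1 : ℝ) else 0)
        = w i k - (if o i = k then w i k else 0) := by
      intro k; by_cases h : o i = k <;> simp [h]
    rw [Finset.sum_congr rfl fun k _ => this k, Finset.sum_sub_distrib,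
      Finset.sum_ite_eq]
    simp
  have h3 : ∀ o : Fin n → Fin K,
      ∑ i, w i (o i)
        = (∑ i, (1 / ((K : ℝ) - 1)) * (∑ j, l i j)) - ∑ i, l i (o i) := by
    intro o
    rw [← Finset.sum_sub_distrib]
    exact Finset.sum_congr rfl fun i _ => hw i (o i)
  constructor
  · intro h o ho
    have := h o ho
    rw [h1, h1] at this
    rw [h2, h2, h3, h3]
    linarith
  · intro h o ho
    have := h o ho
    rw [h2, h2, h3, h3] at this
    rw [h1, h1]
    linarith
end
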